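/- arXiv:2010.00574 — 2 statements merged into one kernel-verified Lean document; each statement's English description precedes it below -/
import Mathlib

section
/- Let $X$ be a probability space, $K$ a compact Hausdorff group equipped with its Baire $\sigma$-algebra and Haar probability measure, and let $f : X \times K \to \mathbb{C}$ be square-integrable with respect to the product measure. Suppose that for every $k_0 \in K$, the function $(x,k) \mapsto f(x, k k_0^{-1})$ agrees with $f$ almost everywhere (where the null set may depend on $k_0$). Then $f$ agrees almost everywhere with the function $(x,k) \mapsto \int_K f(x,k')\, d\mathrm{Haar}_K(k')$; in particular, the equivalence class of $f$ in $L^2(X \times K)$ arises from an element of $L^2(X)$. -/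
/-!
The null sets in the hypothesis depend on `k₀`, so the invariance cannot be read off fibre by
fibre. Instead, for measurable `s ⊆ X` the function `u k = ∫ x in s, f (x, k)` on `K` is invariant
under each right translation up to a null set, and such a function is a.e. constant: approximate it
in `L¹` by a continuous `ψ`; the translates of `ψ` stay uniformly `L¹`-close to `ψ`, and their
average over `K`, a Bochner integral in `C(K, E)`, is the constant `∫ ψ`. Averaging in `C(K, E)`
rather than by Fubini on `K × K` sidesteps the measurability of multiplication for the product
σ-algebra when `K` is not metrizable. Thus `∫ x in s, f (x, k) = ∫ x in s, ∫ k', f (x, k')` for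
a.e. `k`, and a π-λ argument over rectangles `s ×ˢ t` gives the theorem.
-/

open MeasureTheory Set

section CompactGroup

variable {K E : Type*} [Group K] [TopologicalSpace K] [IsTopologicalGroup K] [CompactSpace K]
  [MeasurableSpace K] [BorelSpace K]
  [NormedAddCommGroup E] [NormedSpace ℝ E] [CompleteSpace E] [SecondCountableTopology E]

theorem MeasureTheory.Measure.isMulRightInvariant_of_compactSpace (μ : Measure K)
    [μ.IsHaarMeasure] : μ.IsMulRightInvariant := by
  constructor
  intro k
  have hμ := Measure.isMulInvariant_eq_smul_of_compactSpace (μ.map (· * k)) μ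
  have huniv : μ.map (· * k) univ = μ univ := by
    rw [Measure.map_apply (measurable_mul_const k) MeasurableSet.univ, preimage_univ]
  have hc : Measure.haarScalarFactor (μ.map (· * k)) μ = 1 := by
    rw [hμ, Measure.smul_apply, ENNReal.smul_def, smul_eq_mul] at huniv
    exact_mod_cast (ENNReal.mul_eq_right (NeZero.ne _) (measure_ne_top _ _)).1 huniv
  rw [hμ, hc, one_smul]

theorem ContinuousMap.norm_toLp_sub_const_integral_le {p : ENNReal} [Fact (1 ≤ p)]
    (μ : Measure K) [IsProbabilityMeasure μ] [μ.IsMulLeftInvariant] (ψ : C(K, E)) {C : ℝ}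
    (hC : ∀ k₀, ‖toLp p μ ℝ ψ - toLp p μ ℝ (ψ.comp (.mulRight k₀))‖ ≤ C) :
    ‖toLp p μ ℝ ψ - Lp.const p μ (∫ k, ψ k ∂μ)‖ ≤ C := by
  have htrans : Continuous fun k₀ => ψ.comp (.mulRight k₀) :=
    (ContinuousMap.curry ⟨fun q : K × K => ψ (q.2 * q.1), by fun_prop⟩).continuous
  have hint : Integrable (fun k₀ => ψ.comp (.mulRight k₀)) μ :=
    htrans.integrable_of_hasCompactSupport (HasCompactSupport.of_compactSpace _)
  have havg : ∫ k₀, ψ.comp (.mulRight k₀) ∂μ = ContinuousMap.const K (∫ k, ψ k ∂μ) := by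
    ext k
    rw [← ContinuousMap.evalCLM_apply ℝ k, ← ContinuousLinearMap.integral_comp_comm _ hint]
    exact integral_mul_left_eq_self ψ k
  have hconst : toLp p μ ℝ (ContinuousMap.const K (∫ k, ψ k ∂μ)) = Lp.const p μ (∫ k, ψ k ∂μ) :=
    Lp.ext ((ContinuousMap.coeFn_toLp μ _).trans (Lp.coeFn_const p μ _).symm)
  calc ‖toLp p μ ℝ ψ - Lp.const p μ (∫ k, ψ k ∂μ)‖
      = ‖∫ k₀, (toLp p μ ℝ ψ - toLp p μ ℝ (ψ.comp (.mulRight k₀))) ∂μ‖ := by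
        rw [integral_sub (integrable_const _) ((toLp p μ ℝ).integrable_comp hint), integral_const,
          probReal_univ, one_smul, (toLp p μ ℝ).integral_comp_comm hint, havg, hconst]
    _ ≤ C := by simpa using norm_integral_le_of_norm_le_const (μ := μ) (.of_forall hC)

theorem MeasureTheory.Integrable.norm_toL1_sub_const_integral_le
    {μ : Measure K} [IsProbabilityMeasure μ] [μ.IsHaarMeasure] {u : K → E}
    (hu : Integrable u μ) (hinv : ∀ k₀, (fun k => u (k * k₀)) =ᵐ[μ] u) (ψ : C(K, E)) :
    ‖hu.toL1 u - Lp.const 1 μ (∫ k, u k ∂μ)‖ ≤ 4 * ‖hu.toL1 u - ContinuousMap.toLp 1 μ ℝ ψ‖ := by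
  have := μ.isMulRightInvariant_of_compactSpace
  let τ (k₀ : K) : Lp E 1 μ →+ Lp E 1 μ :=
    Lp.compMeasurePreserving (· * k₀) (measurePreserving_mul_right μ k₀)
  have hτ_toLp (k₀ : K) :
      τ k₀ (ContinuousMap.toLp 1 μ ℝ ψ) = ContinuousMap.toLp 1 μ ℝ (ψ.comp (.mulRight k₀)) :=
    Lp.ext <| (Lp.coeFn_compMeasurePreserving _ _).trans <|
      ((measurePreserving_mul_right μ k₀).quasiMeasurePreserving.ae_eq_comp
        (ContinuousMap.coeFn_toLp μ ψ)).trans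
        (ContinuousMap.coeFn_toLp μ (ψ.comp (.mulRight k₀))).symm
  set U := hu.toL1 u
  have hτU (k₀ : K) : τ k₀ U = U :=
    Lp.ext <| (Lp.coeFn_compMeasurePreserving _ _).trans <|
      ((measurePreserving_mul_right μ k₀).quasiMeasurePreserving.ae_eq_comp
        hu.coeFn_toL1).trans ((hinv k₀).trans hu.coeFn_toL1.symm)
  set Ψ := ContinuousMap.toLp 1 μ ℝ ψ
  have hshift (k₀ : K) : ‖Ψ - ContinuousMap.toLp 1 μ ℝ (ψ.comp (.mulRight k₀))‖ ≤ 2 * ‖U - Ψ‖ :=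
    calc ‖Ψ - ContinuousMap.toLp 1 μ ℝ (ψ.comp (.mulRight k₀))‖ = ‖(Ψ - U) + τ k₀ (U - Ψ)‖ := by
          rw [← hτ_toLp, map_sub, hτU, sub_add_sub_cancel]
      _ ≤ ‖Ψ - U‖ + ‖τ k₀ (U - Ψ)‖ := norm_add_le _ _
      _ = 2 * ‖U - Ψ‖ := by rw [Lp.norm_compMeasurePreserving, norm_sub_rev]; ring
  have hmean : ‖∫ k, ψ k ∂μ - ∫ k, u k ∂μ‖ ≤ ‖U - Ψ‖ := by
    have : ∫ k, ψ k ∂μ - ∫ k, u k ∂μ = ∫ k, (Ψ - U) k ∂μ := by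
      rw [← integral_sub (ψ.continuous.integrable_of_hasCompactSupport
        (HasCompactSupport.of_compactSpace _)) hu]
      refine integral_congr_ae ?_
      filter_upwards [Lp.coeFn_sub Ψ U, ContinuousMap.coeFn_toLp (𝕜 := ℝ) (p := 1) μ ψ,
        hu.coeFn_toL1] with k hk hΨk hUk
      rw [hk, Pi.sub_apply, hΨk, hUk]
    rw [this, norm_sub_rev, L1.norm_eq_integral_norm]
    exact norm_integral_le_integral_norm _
  calc ‖U - Lp.const 1 μ (∫ k, u k ∂μ)‖
      = ‖(U - Ψ) + (Ψ - Lp.const 1 μ (∫ k, ψ k ∂μ))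
          + Lp.const 1 μ (∫ k, ψ k ∂μ - ∫ k, u k ∂μ)‖ := by rw [map_sub]; abel_nf
    _ ≤ ‖U - Ψ‖ + 2 * ‖U - Ψ‖ + ‖U - Ψ‖ := by
        refine norm_add₃_le.trans (add_le_add_three le_rfl
          (ψ.norm_toLp_sub_const_integral_le μ hshift) ?_)
        rwa [Lp.norm_const _ _ _ one_ne_zero, probReal_univ, Real.one_rpow, mul_one]
    _ = 4 * ‖U - Ψ‖ := by ring

theorem MeasureTheory.Integrable.ae_eq_integral_of_forall_comp_mul_right_ae_eq
    {μ : Measure K} [IsProbabilityMeasure μ] [μ.IsHaarMeasure] {u : K → E}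
    (hu : Integrable u μ) (hinv : ∀ k₀, (fun k => u (k * k₀)) =ᵐ[μ] u) :
    u =ᵐ[μ] fun _ => ∫ k, u k ∂μ := by
  have hU : hu.toL1 u = Lp.const 1 μ (∫ k, u k ∂μ) := by
    rw [← sub_eq_zero, ← norm_le_zero_iff]
    refine le_of_forall_pos_le_add fun ε hε => ?_
    obtain ⟨ψ, hψ⟩ := (ContinuousMap.toLp_denseRange E μ ℝ ENNReal.one_ne_top).exists_dist_lt
      (hu.toL1 u) (by positivity : 0 < ε / 4)
    rw [dist_eq_norm] at hψ
    linarith [hu.norm_toL1_sub_const_integral_le hinv ψ]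
  filter_upwards [hu.coeFn_toL1, Lp.coeFn_const 1 μ (∫ k, u k ∂μ)] with k hUk hck
  rw [← hUk, hU, hck, Function.const_apply]

end CompactGroup

section Prod

variable {α β E : Type*} [MeasurableSpace α] [MeasurableSpace β] {μ : Measure α} {ν : Measure β}
  [SFinite μ] [SFinite ν] [NormedAddCommGroup E] [NormedSpace ℝ E]

theorem MeasureTheory.integral_prod_right_congr_ae {f g : α × β → E} (hfg : f =ᵐ[μ.prod ν] g) :
    (fun y => ∫ x, f (x, y) ∂μ) =ᵐ[ν] fun y => ∫ x, g (x, y) ∂μ := by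
  filter_upwards [Measure.ae_ae_of_ae_prod
    ((Measure.measurePreserving_swap (μ := ν) (ν := μ)).quasiMeasurePreserving.ae hfg)]
    with y hy using integral_congr_ae hy

variable [CompleteSpace E]

theorem MeasureTheory.Integrable.ae_eq_zero_of_forall_ae_setIntegral_prod_right_eq_zero
    {f : α × β → E} (hf : Integrable f (μ.prod ν))
    (h : ∀ s, MeasurableSet s → ∀ᵐ y ∂ν, ∫ x in s, f (x, y) ∂μ = 0) : f =ᵐ[μ.prod ν] 0 := by
  have hrect (s : Set α) (t : Set β) (hs : MeasurableSet s) :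
      ∫ z in s ×ˢ t, f z ∂μ.prod ν = 0 := by
    rw [← Measure.prod_restrict,
      integral_prod_symm _ (by rw [Measure.prod_restrict]; exact hf.integrableOn)]
    exact integral_eq_zero_of_ae (ae_restrict_of_ae (h s hs))
  suffices ∀ s, MeasurableSet s → ∫ z in s, f z ∂μ.prod ν = 0 from
    hf.ae_eq_zero_of_forall_setIntegral_eq_zero fun s hs _ => this s hs
  intro s hs
  induction s, hs using MeasurableSpace.induction_on_inter generateFrom_prod.symm
    isPiSystem_prod with
  | empty => simp
  | basic _ hst =>
    obtain ⟨s, hs, t, -, rfl⟩ := hst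
    exact hrect s t hs
  | compl t htm iht =>
    have huniv := hrect univ univ .univ
    rw [univ_prod_univ, setIntegral_univ] at huniv
    simpa [iht, huniv] using integral_add_compl htm hf
  | iUnion g g_disj g_meas hg => simp [integral_iUnion g_meas g_disj hf.integrableOn, hg]

end Prod

theorem MeasureTheory.Integrable.ae_eq_integral_snd_of_forall_ae_eq_mul_right
    {X K E : Type*} [MeasurableSpace X] [Group K] [TopologicalSpace K] [IsTopologicalGroup K]
    [CompactSpace K] [MeasurableSpace K] [BorelSpace K]
    [NormedAddCommGroup E] [NormedSpace ℝ E] [CompleteSpace E] [SecondCountableTopology E]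
    {μX : Measure X} [SFinite μX] {μK : Measure K} [IsProbabilityMeasure μK] [μK.IsHaarMeasure]
    {f : X × K → E} (hf : Integrable f (μX.prod μK))
    (hinv : ∀ k₀, (fun p : X × K => f (p.1, p.2 * k₀)) =ᵐ[μX.prod μK] f) :
    f =ᵐ[μX.prod μK] fun p => ∫ k, f (p.1, k) ∂μK := by
  set F := fun x => ∫ k, f (x, k) ∂μK
  have hF : Integrable F μX := hf.integral_prod_left
  rw [← sub_ae_eq_zero]
  refine (hf.sub (hF.comp_fst μK)).ae_eq_zero_of_forall_ae_setIntegral_prod_right_eq_zero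
    fun s _ => ?_
  have hprod : (μX.restrict s).prod μK = (μX.prod μK).restrict (s ×ˢ univ) :=
    Measure.restrict_prod_eq_prod_univ s
  have hfs : Integrable f ((μX.restrict s).prod μK) := hprod ▸ hf.integrableOn
  have hu := hfs.integral_prod_right.ae_eq_integral_of_forall_comp_mul_right_ae_eq fun k₀ =>
    integral_prod_right_congr_ae (hprod ▸ ae_restrict_of_ae (hinv k₀))
  have hmean : ∫ k, ∫ x in s, f (x, k) ∂μX ∂μK = ∫ x in s, F x ∂μX :=
    (integral_prod_symm f hfs).symm.trans (integral_prod f hfs)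
  filter_upwards [hu, hfs.prod_left_ae] with k huk hfk
  simp only [Pi.sub_apply]
  rw [integral_sub hfk hF.integrableOn, huk, hmean, sub_self]

theorem stmt_4_general {X K : Type*} [MeasurableSpace X]
    [Group K] [TopologicalSpace K] [IsTopologicalGroup K] [CompactSpace K]
    [MeasurableSpace K] [BorelSpace K]
    (μX : Measure X) [IsProbabilityMeasure μX]
    (μK : Measure K) [IsProbabilityMeasure μK] [μK.IsHaarMeasure]
    (f : X × K → ℂ) (hf : MemLp f 2 (μX.prod μK))
    (hinv : ∀ k₀ : K, (fun p : X × K => f (p.1, p.2 * k₀⁻¹)) =ᵐ[μX.prod μK] f) :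
    f =ᵐ[μX.prod μK] fun p : X × K => ∫ k', f (p.1, k') ∂μK := by
  refine (hf.integrable one_le_two).ae_eq_integral_snd_of_forall_ae_eq_mul_right fun k₀ => ?_
  simpa using hinv k₀⁻¹

/-- If `f ∈ L²(X × K)` is invariant under each right translation in the
second (Haar-measured compact group) coordinate, up to null sets depending on the
group element, then `f` agrees a.e. with the fiberwise integral
`(x,k) ↦ ∫ f(x,k') dHaar(k')`; in particular it arises from `L²(X)`. -/
theorem stmt_4 {X K : Type*} [MeasurableSpace X]
    [Group K] [TopologicalSpace K] [IsTopologicalGroup K] [CompactSpace K] [T2Space K]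
    [MeasurableSpace K] [BorelSpace K]
    (μX : Measure X) [IsProbabilityMeasure μX]
    (μK : Measure K) [IsProbabilityMeasure μK] [μK.IsHaarMeasure]
    (f : X × K → ℂ) (hf : MemLp f 2 (μX.prod μK))
    (hinv : ∀ k₀ : K, (fun p : X × K => f (p.1, p.2 * k₀⁻¹)) =ᵐ[μX.prod μK] f) :
    f =ᵐ[μX.prod μK] fun p : X × K => ∫ k', f (p.1, k') ∂μK :=
  stmt_4_general μX μK f hf hinv
end

section
/- Let $X$ be a compact Hausdorff space, $K$ a compact Hausdorff group acting continuously on $X$ (on the right), and let $\pi : X \to Y$ be a continuous surjection onto a compact Hausdorff space $Y$ whose fibers are unions of $K$-orbits, with the property that every $K$-invariant continuous function on $X$ factors through $\pi$. Suppose $s : Y \to X$ is a continuous section of $\pi$ (i.e., $\pi \circ s = \mathrm{id}_Y$). Then for every $y \in Y$, the orbit $\{s(y) \cdot k : k \in K\}$ equals the whole fiber $\pi^{-1}(y)$; i.e., $K$ acts transitively on each fiber of $\pi$. -/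
/-! Continuous functions constant on orbits separate the orbits of a compact group acting on a
compact Hausdorff space. If `x ∈ π⁻¹(y)` were outside the orbit of `s y`, such a function would
factor through `π` and still take different values at `x` and `s y`, which share the image `y`. -/

open MulOpposite

abbrev MulAction.ofRightAction {K X : Type*} [Monoid K] (act : X → K → X)
    (one_act : ∀ x : X, act x 1 = x)
    (act_act : ∀ (x : X) (k k' : K), act (act x k) k' = act x (k * k')) :
    MulAction Kᵐᵒᵖ X where
  smul k x := act x k.unop
  one_smul := one_act
  mul_smul k k' x := (act_act x k'.unop k.unop).symm

section CompactGroupAction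

variable {G X : Type*} [Group G] [TopologicalSpace G] [CompactSpace G]
  [TopologicalSpace X] [CompactSpace X] [T2Space X] [MulAction G X] [ContinuousSMul G X]

variable (G X) in
theorem ProperSMul.of_compactSpace : ProperSMul G X :=
  ⟨(continuous_smul.prodMk continuous_snd).isProperMap⟩

/-- The orbit space is compact Hausdorff, so Urysohn's lemma separates the orbits of `x` and `y`
by a continuous function on it, which lifts to an invariant function on `X`. -/
theorem MulAction.exists_invariant_continuousMap_ne_of_notMem_orbit {x y : X}
    (hy : y ∉ orbit G x) :
    ∃ f : C(X, ℝ), (∀ (g : G) (z : X), f (g • z) = f z) ∧ f x ≠ f y := by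
  have := ProperSMul.of_compactSpace G X
  let q : C(X, Quotient (orbitRel G X)) := ⟨Quotient.mk _, continuous_quotient_mk'⟩
  have hq : q x ≠ q y := fun h => hy (Quotient.eq.mp h.symm)
  obtain ⟨u, hux, huy, -⟩ := exists_continuous_zero_one_of_isClosed isClosed_singleton
    isClosed_singleton (Set.disjoint_singleton.mpr hq)
  refine ⟨u.comp q, fun g z => ?_, ?_⟩
  · exact congrArg u (Quotient.sound (mem_orbit z g))
  · simp [hux rfl, huy rfl]

end CompactGroupAction

theorem stmt_16_general {X Y K : Type*}
    [TopologicalSpace X] [CompactSpace X] [T2Space X]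
    [TopologicalSpace Y]
    [Group K] [TopologicalSpace K] [CompactSpace K]
    (act : X → K → X)
    (hact1 : ∀ x : X, act x 1 = x)
    (hactmul : ∀ (x : X) (k k' : K), act (act x k) k' = act x (k * k'))
    (hactcont : Continuous fun p : X × K => act p.1 p.2)
    (π : C(X, Y))
    (hfactor : ∀ f : C(X, ℝ), (∀ (x : X) (k : K), f (act x k) = f x) →
      ∃ g : C(Y, ℝ), ∀ x : X, f x = g (π x))
    (s : C(Y, X)) (hs : ∀ y : Y, π (s y) = y) :
    ∀ (y : Y) (x : X), π x = y → ∃ k : K, act (s y) k = x := by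
  intro y x hx
  let := MulAction.ofRightAction act hact1 hactmul
  have : ContinuousSMul Kᵐᵒᵖ X :=
    ⟨hactcont.comp (continuous_snd.prodMk (continuous_unop.comp continuous_fst))⟩
  by_contra hx_orbit
  have hx_notMem : x ∉ MulAction.orbit Kᵐᵒᵖ (s y) := fun ⟨k, hk⟩ => hx_orbit ⟨k.unop, hk⟩
  obtain ⟨f, hf_inv, hf_ne⟩ :=
    MulAction.exists_invariant_continuousMap_ne_of_notMem_orbit hx_notMem
  obtain ⟨g, hg⟩ := hfactor f fun z k => hf_inv (op k) z
  exact hf_ne (by rw [hg, hg, hs, hx])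

/-- let a compact Hausdorff group `K` act continuously (on the right) on
a compact Hausdorff space `X`, let `π : X → Y` be a continuous surjection constant on
`K`-orbits such that every `K`-invariant continuous function factors through `π`, and
let `s` be a continuous section of `π`. Then `K` acts transitively on each fiber:
the orbit of `s(y)` is the whole fiber `π⁻¹(y)`. -/
theorem stmt_16 {X Y K : Type*}
    [TopologicalSpace X] [CompactSpace X] [T2Space X]
    [TopologicalSpace Y] [CompactSpace Y] [T2Space Y]
    [Group K] [TopologicalSpace K] [IsTopologicalGroup K] [CompactSpace K] [T2Space K]
    (act : X → K → X)
    (hact1 : ∀ x : X, act x 1 = x)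
    (hactmul : ∀ (x : X) (k k' : K), act (act x k) k' = act x (k * k'))
    (hactcont : Continuous fun p : X × K => act p.1 p.2)
    (π : C(X, Y)) (hπsurj : Function.Surjective π)
    (hfib : ∀ (x : X) (k : K), π (act x k) = π x)
    (hfactor : ∀ f : C(X, ℝ), (∀ (x : X) (k : K), f (act x k) = f x) →
      ∃ g : C(Y, ℝ), ∀ x : X, f x = g (π x))
    (s : C(Y, X)) (hs : ∀ y : Y, π (s y) = y) :
    ∀ (y : Y) (x : X), π x = y → ∃ k : K, act (s y) k = x :=
  stmt_16_general act hact1 hactmul hactcont π hfactor s hs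
end
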